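/- If S and T are finsets of naturals with enc(S) + enc(T) = enc(U) for some finset U with |U| = |S| + |T|, then S and T are disjoint and U = S ∪ T. -/
import Mathlib


def enc (S : Finset ℕ) : ℕ := ∑ i ∈ S, 2 ^ i

namespace EncAux

/-- popcount -/
def pc (n : ℕ) : ℕ := n.bitIndices.length

lemma pc_two_mul (n : ℕ) : pc (2 * n) = pc n := by
  simp [pc, Nat.bitIndices_two_mul]

lemma pc_two_mul_add_one (n : ℕ) : pc (2 * n + 1) = pc n + 1 := by
  simp [pc, Nat.bitIndices_two_mul_add_one]

lemma pc_one : pc 1 = 1 := by simp [pc]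

lemma pc_zero : pc 0 = 1 - 1 := by simp [pc]

lemma list_toFinset_map (l : List ℕ) (f : ℕ → ℕ) :
    (l.map f).toFinset = l.toFinset.image f := by
  ext x; simp

lemma toFinset_two_mul (n : ℕ) :
    (2 * n).bitIndices.toFinset = n.bitIndices.toFinset.image (· + 1) := by
  rw [Nat.bitIndices_two_mul, list_toFinset_map]

lemma toFinset_two_mul_add_one (n : ℕ) :
    (2 * n + 1).bitIndices.toFinset
      = insert 0 (n.bitIndices.toFinset.image (· + 1)) := by
  rw [Nat.bitIndices_two_mul_add_one, List.toFinset_cons, list_toFinset_map]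

lemma zero_not_mem_image (A : Finset ℕ) : 0 ∉ A.image (· + 1) := by
  simp

lemma disjoint_image_iff {A B : Finset ℕ} :
    Disjoint (A.image (· + 1)) (B.image (· + 1)) ↔ Disjoint A B :=
  Finset.disjoint_image (add_left_injective 1)

lemma key : ∀ n a b : ℕ, a + b = n →
    pc (a + b) ≤ pc a + pc b ∧
      (pc (a + b) = pc a + pc b →
        Disjoint a.bitIndices.toFinset b.bitIndices.toFinset) := by
  intro n
  induction n using Nat.strong_induction_on with
  | _ n IH =>
    intro a b hn
    rcases Nat.eq_zero_or_pos a with rfl | ha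
    · simp
    rcases Nat.eq_zero_or_pos b with rfl | hb
    · simp
    rcases Nat.even_or_odd a with ⟨a', rfl⟩ | ⟨a', rfl⟩ <;>
      rcases Nat.even_or_odd b with ⟨b', rfl⟩ | ⟨b', rfl⟩
    · -- both even
      have h1 : a' + a' = 2 * a' := by ring
      have h2 : b' + b' = 2 * b' := by ring
      rw [h1, h2] at *
      have hab : 2 * a' + 2 * b' = 2 * (a' + b') := by ring
      have hlt : a' + b' < n := by omega
      obtain ⟨ih1, ih2⟩ := IH (a' + b') hlt a' b' rfl
      constructor
      · rw [hab, pc_two_mul, pc_two_mul, pc_two_mul]; exact ih1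
      · intro he
        rw [hab, pc_two_mul, pc_two_mul, pc_two_mul] at he
        rw [toFinset_two_mul, toFinset_two_mul, disjoint_image_iff]
        exact ih2 he
    · -- a even, b odd
      have h1 : a' + a' = 2 * a' := by ring
      rw [h1] at *
      have hab : 2 * a' + (2 * b' + 1) = 2 * (a' + b') + 1 := by ring
      have hlt : a' + b' < n := by omega
      obtain ⟨ih1, ih2⟩ := IH (a' + b') hlt a' b' rfl
      constructor
      · rw [hab, pc_two_mul, pc_two_mul_add_one, pc_two_mul_add_one]; omega
      · intro he
        rw [hab, pc_two_mul, pc_two_mul_add_one, pc_two_mul_add_one] at he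
        rw [toFinset_two_mul, toFinset_two_mul_add_one]
        rw [Finset.disjoint_insert_right]
        refine ⟨zero_not_mem_image _, ?_⟩
        rw [disjoint_image_iff]
        exact ih2 (by omega)
    · -- a odd, b even
      have h2 : b' + b' = 2 * b' := by ring
      rw [h2] at *
      have hab : (2 * a' + 1) + 2 * b' = 2 * (a' + b') + 1 := by ring
      have hlt : a' + b' < n := by omega
      obtain ⟨ih1, ih2⟩ := IH (a' + b') hlt a' b' rfl
      constructor
      · rw [hab, pc_two_mul, pc_two_mul_add_one, pc_two_mul_add_one]; omega
      · intro he
        rw [hab, pc_two_mul, pc_two_mul_add_one, pc_two_mul_add_one] at he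
        rw [toFinset_two_mul, toFinset_two_mul_add_one]
        rw [Finset.disjoint_insert_left]
        refine ⟨zero_not_mem_image _, ?_⟩
        rw [disjoint_image_iff]
        exact ih2 (by omega)
    · -- both odd: strict inequality
      have hab : (2 * a' + 1) + (2 * b' + 1) = 2 * (a' + b' + 1) := by ring
      have hlt1 : a' + (b' + 1) < n := by omega
      have hlt2 : b' + 1 < n := by omega
      obtain ⟨ih1, _⟩ := IH (a' + (b' + 1)) hlt1 a' (b' + 1) rfl
      obtain ⟨ih3, _⟩ := IH (b' + 1) hlt2 b' 1 rfl
      have hstrict : pc ((2 * a' + 1) + (2 * b' + 1))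
          < pc (2 * a' + 1) + pc (2 * b' + 1) := by
        rw [hab, pc_two_mul, pc_two_mul_add_one, pc_two_mul_add_one]
        have : pc (a' + (b' + 1)) ≤ pc a' + pc (b' + 1) := ih1
        have : pc (b' + 1) ≤ pc b' + pc 1 := ih3
        rw [pc_one] at this
        have h0 : a' + (b' + 1) = a' + b' + 1 := by ring
        rw [h0] at ih1
        omega
      exact ⟨hstrict.le, fun he => absurd he hstrict.ne⟩

lemma pc_enc (S : Finset ℕ) : pc (enc S) = S.card := by
  have h1 : (enc S).bitIndices.toFinset = S := Finset.toFinset_bitIndices_twoPowSum S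
  have h2 : (enc S).bitIndices.Nodup := Nat.bitIndices_sorted.nodup
  conv_rhs => rw [← h1]
  rw [List.card_toFinset, h2.dedup]
  rfl

end EncAux

theorem enc_add_enc_eq_enc (S T U : Finset ℕ)
    (hcard : U.card = S.card + T.card)
    (h : enc S + enc T = enc U) :
    Disjoint S T ∧ U = S ∪ T := by
  have heq : EncAux.pc (enc S + enc T) = EncAux.pc (enc S) + EncAux.pc (enc T) := by
    rw [h, EncAux.pc_enc, EncAux.pc_enc, EncAux.pc_enc, hcard]
  have hd := (EncAux.key (enc S + enc T) (enc S) (enc T) rfl).2 heq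
  rw [show (enc S).bitIndices.toFinset = S from Finset.toFinset_bitIndices_twoPowSum S,
    show (enc T).bitIndices.toFinset = T from Finset.toFinset_bitIndices_twoPowSum T] at hd
  refine ⟨hd, ?_⟩
  have hsum : enc (S ∪ T) = enc S + enc T := by
    unfold enc
    exact Finset.sum_union hd
  have : enc U = enc (S ∪ T) := by rw [hsum, h]
  exact Finset.geomSum_injective (le_refl 2) this
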